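/- Bounds for the localization norm of a star product: For any a, b ∈ V and any m ∈ ℕ₀, ‖a⋆b‖_loc ≤ ‖L(b)‖ ( 2^{m+1} ‖a‖_loc + ∑_{n=0}^{∞} 2^{−(n+1)} ‖P̃_n L(a) Q̃_{n+m}‖ ), and ‖a⋆b‖_loc ≤ ‖L(a)‖ ( 2^{m+1} ‖b‖_loc + ∑_{n=0}^{∞} 2^{−(n+1)} ‖Q̃_{n+m} L(b) P̃_n‖ ). -/

import Mathlib

open Filter MeasureTheory

noncomputable section

/-- A symbol `a`, where `a k` is the circle function `a_{k/2}` at half-integer `x = k/2`. -/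
abbrev Symb := ℤ → ℂ → ℂ

/-- `m`-th Fourier coefficient of a function on the unit circle. -/
def fCoef (f : ℂ → ℂ) (m : ℤ) : ℂ :=
  (2 * (Real.pi : ℂ))⁻¹ * ∫ p in (-Real.pi)..Real.pi,
    f (Complex.exp (Complex.I * (p : ℂ))) * Complex.exp (-(Complex.I * (m : ℂ) * (p : ℂ)))

/-- Matrix element `L_{j,k}(a) = (a_{(j+k)/2})_{j-k}` of the star-Laurent operator. -/
def Lmat (a : Symb) (j k : ℤ) : ℂ := fCoef (a (j + k)) (j - k)

/-- The annulus `ρ < |z| < ρ⁻¹`. -/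
def annulus (ρ : ℝ) : Set ℂ := {z : ℂ | ρ < ‖z‖ ∧ ‖z‖ < ρ⁻¹}

/-- Membership in `V_ρ`: analytic extension to the annulus, uniformly bounded in `x`. -/
def memVrho (ρ : ℝ) (a : Symb) : Prop :=
  (∀ k : ℤ, AnalyticOnNhd ℂ (a k) (annulus ρ)) ∧
    ∃ M : ℝ, ∀ (k : ℤ), ∀ z ∈ annulus ρ, ‖a k z‖ ≤ M

/-- Membership in `V = ⋃_{ρ ∈ (0,1)} V_ρ`. -/
def memV (a : Symb) : Prop := ∃ ρ : ℝ, ρ ∈ Set.Ioo (0 : ℝ) 1 ∧ memVrho ρ a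

/-- The Moyal star product of two symbols. -/
def starProd (a b : Symb) : Symb := fun x z =>
  ∑' mn : ℤ × ℤ, z ^ (mn.1 + mn.2) * fCoef (a (x + mn.1)) mn.2 * fCoef (b (x - mn.2)) mn.1

/-- Two symbols are equivalent if they generate the same star-Laurent matrix. -/
def symbolEquiv (a b : Symb) : Prop := ∀ j k : ℤ, Lmat a j k = Lmat b j k

/-- The unit symbol. -/
def oneSymbol : Symb := fun _ _ => 1

/-- `+` symbols: the star-Laurent matrix is lower triangular. -/
def isPlus (a : Symb) : Prop := ∀ j k : ℤ, j < k → Lmat a j k = 0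

/-- `-` symbols: the star-Laurent matrix is upper triangular. -/
def isMinus (a : Symb) : Prop := ∀ j k : ℤ, k < j → Lmat a j k = 0

/-- Matrix element of the star-Toeplitz operator (meaningful for `j, k ≥ 1`). -/
def Tmat (a : Symb) (j k : ℕ) : ℂ := Lmat a (j : ℤ) (k : ℤ)

/-- Matrix element of the star-Hankel operator (meaningful for `j, k ≥ 1`). -/
def Hmat (a : Symb) (j k : ℕ) : ℂ := fCoef (a ((j : ℤ) - k + 1)) ((j : ℤ) + k - 1)

/-- The `n × n` star-Toeplitz matrix. -/
def Tn (a : Symb) (n : ℕ) : Matrix (Fin n) (Fin n) ℂ :=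
  Matrix.of fun j k : Fin n => Lmat a ((j : ℤ) + 1) ((k : ℤ) + 1)

/-- The reflected symbol `(a^∼)_x(z) = a_{1-x}(z⁻¹)`. -/
def reflect (a : Symb) : Symb := fun x z => a (2 - x) z⁻¹

/-- Pointwise difference of symbols. -/
def subSym (a b : Symb) : Symb := fun x z => a x z - b x z

/-- Pointwise scalar multiple of a symbol. -/
def smulSym (c : ℂ) (a : Symb) : Symb := fun x z => c * a x z

/-- Star powers of a symbol. -/
def starPow (a : Symb) : ℕ → Symb
  | 0 => oneSymbol
  | n + 1 => starProd a (starPow a n)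

/-- The star exponential of a symbol. -/
def expStar (a : Symb) : Symb := fun x z =>
  ∑' n : ℕ, ((Nat.factorial n : ℂ))⁻¹ * starPow a n x z

/-- `b` is a star logarithm in `V` of `a`. -/
def IsStarLog (b a : Symb) : Prop := memV b ∧ symbolEquiv (expStar b) a

/-- `b` is a star inverse of `a`. -/
def IsStarInv (a b : Symb) : Prop :=
  symbolEquiv (starProd a b) oneSymbol ∧ symbolEquiv (starProd b a) oneSymbol

/-- The symbol `(x, z) ↦ z^n`. -/
def zpowSym (n : ℤ) : Symb := fun _ z => z ^ n

/-- The Moyal bracket `{c, d}_M = -i (c ⋆ d - d ⋆ c)`. -/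
def moyalBracket (c d : Symb) : Symb := fun x z =>
  -Complex.I * (starProd c d x z - starProd d c x z)

/-- `a` has zero star winding number: it admits left and right Wiener-Hopf star
factorizations with `±` factors in `V` whose star logarithms exist in `V`. -/
def HasZeroStarWinding (a : Symb) : Prop :=
  ∃ aLp aLm aRm aRp bLp bLm bRm bRp : Symb,
    isPlus aLp ∧ isMinus aLm ∧ isMinus aRm ∧ isPlus aRp ∧
    memV aLp ∧ memV aLm ∧ memV aRm ∧ memV aRp ∧
    IsStarLog bLp aLp ∧ IsStarLog bLm aLm ∧ IsStarLog bRm aRm ∧ IsStarLog bRp aRp ∧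
    symbolEquiv a (starProd aLp aLm) ∧ symbolEquiv a (starProd aRm aRp)

/-- Operator norm of an infinite matrix, as the least constant `C` with
`‖A v‖₂ ≤ C ‖v‖₂` for finitely supported `v`. -/
def matOpNorm {ι κ : Type*} (A : ι → κ → ℂ) : ℝ :=
  sInf {C : ℝ | 0 ≤ C ∧ ∀ v : κ →₀ ℂ,
    ∑' j : ι, ‖∑ k ∈ v.support, A j k * v k‖ ^ 2 ≤ C ^ 2 * ∑ k ∈ v.support, ‖v k‖ ^ 2}

/-- The matrix of `P̃_n A P̃_n`. -/
def PAP (n : ℕ) (A : ℤ → ℤ → ℂ) : ℤ → ℤ → ℂ := fun j k =>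
  if |j| ≤ (n : ℤ) ∧ |k| ≤ (n : ℤ) then A j k else 0

/-- The matrix of `P̃_n A Q̃_m`. -/
def PAQ (n m : ℕ) (A : ℤ → ℤ → ℂ) : ℤ → ℤ → ℂ := fun j k =>
  if |j| ≤ (n : ℤ) ∧ ¬ |k| ≤ (m : ℤ) then A j k else 0

/-- The matrix of `Q̃_m A P̃_n`. -/
def QAP (m n : ℕ) (A : ℤ → ℤ → ℂ) : ℤ → ℤ → ℂ := fun j k =>
  if ¬ |j| ≤ (m : ℤ) ∧ |k| ≤ (n : ℤ) then A j k else 0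

/-- The localization norm `‖a‖_loc = ∑_{n≥0} 2^{-(n+1)} ‖P̃_n L(a) P̃_n‖`. -/
def locNorm (a : Symb) : ℝ :=
  ∑' n : ℕ, ((2 : ℝ))⁻¹ ^ (n + 1) * matOpNorm (PAP n (Lmat a))


/-- The operator exponential `e^T` applied to a symbol, via the power series. -/
def opExp (T : Symb → Symb) : Symb → Symb := fun d x z =>
  ∑' n : ℕ, ((Nat.factorial n : ℂ))⁻¹ * (T^[n] d) x z

/-- Taylor coefficients of `ψ₁(x) = 2x (x log x + 1 - x)/(x-1)²` around `x = 1`. -/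
def psi1Coef : ℕ → ℂ := fun j =>
  if j = 0 then 1 else 4 * (-1) ^ (j + 1) / ((j : ℂ) * ((j : ℂ) + 1) * ((j : ℂ) + 2))

/-- `ψ₁` of an operator, applied to a symbol, via the power series around the identity. -/
def opPsi1 (T : Symb → Symb) : Symb → Symb := fun d x z =>
  ∑' n : ℕ, psi1Coef n * ((fun e : Symb => fun x' z' => T e x' z' - e x' z')^[n] d) x z

/-- The operator `α • 𝓜(c)`, where `𝓜(c) d = {c,d}_M` is the Moyal adjoint action. -/
def MopS (c : Symb) (α : ℂ) : Symb → Symb := fun e => smulSym α (moyalBracket c e)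

/-- `Φ_BCH(c,d)` of the paper. -/
def PhiBCH (c d : Symb) : Symb := fun x z =>
  (∫ t in (0:ℝ)..(1:ℝ), ∫ s in (0:ℝ)..(1:ℝ),
      (opExp (MopS c (-Complex.I * (s : ℂ)))
        ((opPsi1 (fun e => opExp (MopS c Complex.I) (opExp (MopS d (Complex.I * (t : ℂ))) e))) d)) x z)
  - (∫ t in (0:ℝ)..(1:ℝ), ∫ s in (0:ℝ)..t,
      (opExp (MopS c (Complex.I * (s : ℂ)))
        (opExp (MopS d Complex.I)
          ((opPsi1 (fun e => opExp (MopS d (-Complex.I)) (opExp (MopS c (-Complex.I * (t : ℂ))) e))) c))) x z)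

/-- The pair `(c,d)` belongs to `S_Φ`. -/
def memSPhi (c d : Symb) : Prop :=
  ∃ (F : ℕ → Symb) (ε : ℝ), 0 < ε ∧
    (∀ ν : ℝ, |ν - 1| < ε → Summable (fun n : ℕ => matOpNorm (Lmat (F n)) * |ν| ^ n)) ∧
    (∀ ν : ℝ, |ν - 1| < ε → memV (fun x z => ∑' n : ℕ, (ν : ℂ) ^ n * F n x z)) ∧
    (∀ ν : ℝ, |ν - 1| < ε →
      symbolEquiv (PhiBCH (smulSym (ν : ℂ) c) (smulSym (ν : ℂ) d))
        (fun x z => ∑' n : ℕ, (ν : ℂ) ^ (n + 1) * F n x z))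

/-- A sequence of symbols regularizes `a` (Definition 3.13). -/
def Regularizes (A : ℕ → Symb) (a : Symb) : Prop :=
  Filter.Tendsto (fun k => locNorm (subSym (A k) a)) Filter.atTop (nhds 0) ∧
  ∃ (aLp aLm aRm aRp bLp bLm bRm bRp : ℕ → Symb) (ρ M : ℝ), ρ ∈ Set.Ioo (0:ℝ) 1 ∧
    (∀ k, isPlus (aLp k) ∧ isMinus (aLm k) ∧ isMinus (aRm k) ∧ isPlus (aRp k)) ∧
    (∀ k, memV (aLp k) ∧ memV (aLm k) ∧ memV (aRm k) ∧ memV (aRp k)) ∧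
    (∀ k, symbolEquiv (A k) (starProd (aLp k) (aLm k)) ∧
          symbolEquiv (A k) (starProd (aRm k) (aRp k))) ∧
    (∀ k, symbolEquiv (expStar (bLp k)) (aLp k) ∧ symbolEquiv (expStar (bLm k)) (aLm k) ∧
          symbolEquiv (expStar (bRm k)) (aRm k) ∧ symbolEquiv (expStar (bRp k)) (aRp k)) ∧
    (∀ k, memVrho ρ (bLp k) ∧ memVrho ρ (bLm k) ∧ memVrho ρ (bRm k) ∧ memVrho ρ (bRp k)) ∧
    (∀ k, ∀ b : Symb, (b = bLp k ∨ b = bLm k ∨ b = bRm k ∨ b = bRp k) →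
        ∀ (j : ℤ), ∀ z ∈ annulus ρ, ‖b j z‖ ≤ M) ∧
    (∀ k, memSPhi (bLp k) (bLm k) ∧ memSPhi (bRm k) (bRp k)) ∧
    (∀ k, ∀ b : Symb, (b = bLp k ∨ b = bLm k ∨ b = bRm k ∨ b = bRp k) →
        Summable (fun jl : ℕ × ℕ => ‖Tmat b (jl.1 + 1) (jl.2 + 1)‖))

/-- `a` admits a regularisation. -/
def IsRegularizable (a : Symb) : Prop := ∃ A : ℕ → Symb, Regularizes A a

/-- The boundary term `E_x^{R/L}` of the strong Szegő-type theorem; `k = 2x`. -/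
def Eterm (bp bm dm dp : Symb) (k : ℤ) : ℂ :=
  (1/2 : ℂ) * ∑' m : ℕ, ∑ j ∈ Finset.Icc 1 (m + 1),
    (fCoef (bp (k + 2*(j:ℤ) - ((m:ℤ) + 2))) ((m:ℤ) + 1) *
        fCoef (dm (k + 2*(j:ℤ) - ((m:ℤ) + 2))) (-((m:ℤ) + 1)) +
      fCoef (dp (k + 2*(j:ℤ) - ((m:ℤ) + 2))) ((m:ℤ) + 1) *
        fCoef (bm (k + 2*(j:ℤ) - ((m:ℤ) + 2))) (-((m:ℤ) + 1)))

/-- `T(cinv)` is a two-sided (matrix) inverse of `T(c)` on `ℓ²(ℕ)`. -/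
def TmatTwoSidedInverse (c cinv : Symb) : Prop :=
  ∀ j k : ℕ, 1 ≤ j → 1 ≤ k →
    (∑' l : ℕ, Tmat c j (l + 1) * Tmat cinv (l + 1) k) = (if j = k then 1 else 0) ∧
    (∑' l : ℕ, Tmat cinv j (l + 1) * Tmat c (l + 1) k) = (if j = k then 1 else 0)
-- ### block D : functions on ℝ × (strip) representing symbols

/-- The horizontal strip `log ρ < Im z < -log ρ` in the complex plane. -/
def strip (ρ : ℝ) : Set ℂ := {z : ℂ | Real.log ρ < z.im ∧ z.im < -Real.log ρ}

/-- `a = [F]`: the function `F` on `ℝ × (ℝ/2πℤ)` represents the symbol `a`. -/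
def RepBy (a : Symb) (F : ℝ → ℂ → ℂ) : Prop :=
  ∀ k m : ℤ, (k + m) % 2 = 0 →
    fCoef (a k) m = (2 * (Real.pi : ℂ))⁻¹ *
      ∫ p in (-Real.pi)..Real.pi, F ((k : ℝ) / 2) (p : ℂ) * Complex.exp (-(Complex.I * (m : ℂ) * (p : ℂ)))

/-- Partial derivative in the first (real) argument. -/
def D1 (F : ℝ → ℂ → ℂ) : ℝ → ℂ → ℂ := fun x p => deriv (fun y => F y p) x

/-- Partial derivative in the second (complex) argument. -/
def D2 (F : ℝ → ℂ → ℂ) : ℝ → ℂ → ℂ := fun x p => deriv (fun q => F x q) p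

/-- The `+` part `g⁺` of a function on `ℝ × (ℝ/2πℤ)`. -/
def plusPart (F : ℝ → ℂ → ℂ) : ℝ → ℂ → ℂ := fun y p =>
  ∑' n : ℕ, Complex.exp (Complex.I * (n : ℂ) * p) *
    ((2 * (Real.pi : ℂ))⁻¹ * ∫ q in (-Real.pi)..Real.pi,
      F y (q : ℂ) * Complex.exp (-(Complex.I * (n : ℂ) * (q : ℂ))))

/-- The `-` part `g⁻` of a function on `ℝ × (ℝ/2πℤ)`. -/
def minusPart (F : ℝ → ℂ → ℂ) : ℝ → ℂ → ℂ := fun y p =>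
  ∑' n : ℕ, Complex.exp (-(Complex.I * ((n : ℂ) + 1) * p)) *
    ((2 * (Real.pi : ℂ))⁻¹ * ∫ q in (-Real.pi)..Real.pi,
      F y (q : ℂ) * Complex.exp (Complex.I * ((n : ℂ) + 1) * (q : ℂ)))

/-- Poisson bracket `{u,v} = ∂₁u ∂₂v - ∂₁v ∂₂u`. -/
def pois (u v : ℝ → ℂ → ℂ) : ℝ → ℂ → ℂ := fun y p =>
  D1 u y p * D2 v y p - D1 v y p * D2 u y p

/-- Truncation of the Moyal product to the first `k` orders of derivatives. -/
def moyalTrunc (k : ℕ) (ν : ℝ) (f g : ℝ → ℂ → ℂ) : ℝ → ℂ → ℂ := fun y p =>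
  ∑ j ∈ Finset.range k, ((Nat.factorial j : ℂ))⁻¹ * (Complex.I * (ν : ℂ) / 2) ^ j *
    ∑ i ∈ Finset.range (j + 1), (j.choose i : ℂ) * (-1) ^ (j - i) *
      (D1^[j - i] (D2^[i] f)) y p * (D1^[i] (D2^[j - i] g)) y p

/-- The second-order expansion of `log f₊ᴴ(ν) + log f₋ᴴ(ν)` (Corollary 4.5), `σ = σ_H`. -/
def whExp2 (σ : ℝ) (ν : ℝ) (g : ℝ → ℂ → ℂ) : ℝ → ℂ → ℂ := fun y p =>
  g y p + (Complex.I / 2) * (σ : ℂ) * (ν : ℂ) * pois (minusPart g) (plusPart g) y p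
    + ((ν : ℂ) ^ 2 / 8) *
      (2 * pois (plusPart g) (minusPart (pois (minusPart g) (plusPart g))) y p
        - 2 * pois (minusPart g) (plusPart (pois (minusPart g) (plusPart g))) y p
        - D2 (minusPart g) y p * pois (minusPart g) (D1 (plusPart g)) y p
        + D1 (minusPart g) y p * pois (minusPart g) (D2 (plusPart g)) y p
        - D1 (plusPart g) y p * pois (D2 (minusPart g)) (plusPart g) y p
        + D2 (plusPart g) y p * pois (D1 (minusPart g)) (plusPart g) y p
        - pois (D2 (minusPart g)) (D1 (plusPart g)) y p
        + pois (D1 (minusPart g)) (D2 (plusPart g)) y p)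

/-- The bidifferential operator `((∂_{φ₁}∂_{φ₂'} - ∂_{φ₂}∂_{φ₁'})/2)^N F(φ') R(φ)|_{φ'=φ}`. -/
def bidiff (N : ℕ) (F R : ℝ → ℂ → ℂ) : ℝ → ℂ → ℂ := fun y p =>
  ((1 : ℂ) / 2) ^ N * ∑ i ∈ Finset.range (N + 1), (N.choose i : ℂ) * (-1) ^ (N - i) *
    (D1^[N - i] (D2^[i] F)) y p * (D2^[N - i] (D1^[i] R)) y p

/-- Auxiliary family for the recursive definition of `R_m^{(ζ)}[f]`. -/
def RresAux (f : ℝ → ℂ → ℂ) (ζ : ℂ) : ℕ → ℕ → ℝ → ℂ → ℂ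
  | 0 => fun _ => fun y p => (ζ - f y p)⁻¹
  | m + 1 => fun n =>
      if n ≤ m then RresAux f ζ m n
      else fun y p => (ζ - f y p)⁻¹ *
        ∑ j ∈ Finset.range (m + 1),
          ((Nat.choose (2 * (m + 1)) (2 * j) : ℂ)) * (-1) ^ (m + 1 - j) *
            bidiff (2 * (m + 1 - j)) f (RresAux f ζ m j) y p

/-- The coefficients `R_m^{(ζ)}[f]` of the asymptotic expansion of the star resolvent. -/
def Rres (f : ℝ → ℂ → ℂ) (ζ : ℂ) (m : ℕ) : ℝ → ℂ → ℂ := RresAux f ζ m m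

/-- `E(c) = ∑_{k≥1} k (log c)_k (log c)_{-k}`. -/
def Efun (c : ℂ → ℂ) : ℂ :=
  ∑' k : ℕ, ((k : ℂ) + 1) * fCoef (fun z => Complex.log (c z)) ((k : ℤ) + 1) *
    fCoef (fun z => Complex.log (c z)) (-((k : ℤ) + 1))

/-! For `a ∈ V` the Cauchy estimate on the annulus makes the entries of `L(a)` decay
geometrically away from the diagonal, so `L(a)` passes the Schur test and
`L(a ⋆ b) = L(a) L(b)` holds entrywise with absolutely convergent sums. Splitting
`P̃ₙ L(a) = P̃ₙ L(a) P̃ₙ₊ₘ + P̃ₙ L(a) Q̃ₙ₊ₘ` gives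
`‖P̃ₙ L(a ⋆ b) P̃ₙ‖ ≤ ‖L(b)‖ (‖P̃ₙ₊ₘ L(a) P̃ₙ₊ₘ‖ + ‖P̃ₙ L(a) Q̃ₙ₊ₘ‖)`, and after weighting by
`2^{-(n+1)}` the shift `n ↦ n + m` costs at most a factor `2^{m+1}`. The second bound is the mirror
image, splitting `L(b) P̃ₙ = P̃ₙ₊ₘ L(b) P̃ₙ + Q̃ₙ₊ₘ L(b) P̃ₙ` instead. -/

section FourierCoefficients

open Complex Metric
open scoped Real

lemma fCoef_eq_circleIntegral (f : ℂ → ℂ) (d : ℤ) :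
    fCoef f d = (2 * π * I)⁻¹ * ∮ z in C(0, 1), f z * z ^ (-d - 1) := by
  set g : ℝ → ℂ := fun p => f (exp (I * p)) * exp (-(I * d * p))
  have hper : Function.Periodic g (2 * π) := fun p => by
    have h1 : I * ((p + 2 * π : ℝ) : ℂ) = I * p + 2 * π * I := by push_cast; ring
    have h2 : -(I * d * ((p + 2 * π : ℝ) : ℂ)) = -(I * d * p) + (-d : ℤ) * (2 * π * I) := by
      push_cast; ring
    simp only [g, h1, h2, exp_add, exp_int_mul_two_pi_mul_I, exp_two_pi_mul_I, mul_one]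
  have hshift : ∫ p in (-π)..π, g p = ∫ p in (0 : ℝ)..(2 * π), g p := by
    simpa [show -π + 2 * π = π by ring] using hper.intervalIntegral_add_eq (-π) 0
  have hcirc : (∮ z in C(0, 1), f z * z ^ (-d - 1)) = I * ∫ p in (0 : ℝ)..(2 * π), g p := by
    rw [circleIntegral, ← intervalIntegral.integral_const_mul]
    refine intervalIntegral.integral_congr fun θ _ => ?_
    have hmap : circleMap 0 1 θ = exp (I * θ) := by simp [circleMap, mul_comm]
    rw [deriv_circleMap, hmap, smul_eq_mul, ← exp_int_mul]
    calc exp (I * θ) * I * (f (exp (I * θ)) * exp ((-d - 1 : ℤ) * (I * θ)))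
        = I * (f (exp (I * θ)) * exp (I * θ + (-d - 1 : ℤ) * (I * θ))) := by
          rw [exp_add]; ring
      _ = I * g θ := by simp only [g]; congr 3; push_cast; ring
  rw [fCoef, hcirc, ← hshift, mul_inv (2 * (π : ℂ)) I, mul_assoc, inv_mul_cancel_left₀ I_ne_zero]

lemma circleIntegral_eq_of_annulus {ρ s t : ℝ} {f : ℂ → ℂ} (hf : AnalyticOnNhd ℂ f (annulus ρ))
    (d : ℤ) (hs0 : 0 < s) (hs : ρ < s) (hst : s ≤ t) (ht : t < ρ⁻¹) :
    (∮ z in C(0, t), f z * z ^ (-d - 1)) = ∮ z in C(0, s), f z * z ^ (-d - 1) := by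
  have hsub : closedBall (0 : ℂ) t \ ball 0 s ⊆ annulus ρ \ {0} := fun z ⟨h1, h2⟩ => by
    rw [mem_closedBall_zero_iff] at h1
    rw [mem_ball_zero_iff, not_lt] at h2
    exact ⟨⟨hs.trans_le h2, h1.trans_lt ht⟩, fun h0 => by simp_all [not_le.2 hs0]⟩
  have hdiff : ∀ z ∈ closedBall (0 : ℂ) t \ ball 0 s,
      DifferentiableAt ℂ (fun z => f z * z ^ (-d - 1)) z := fun z hz =>
    ((hf z (hsub hz).1).differentiableAt).mul (differentiableAt_zpow.2 (Or.inl (hsub hz).2))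
  refine circleIntegral_eq_of_differentiable_on_annulus_off_countable hs0 hst Set.countable_empty
    (fun z hz => (hdiff z hz).continuousAt.continuousWithinAt) fun z hz => hdiff z ?_
  exact ⟨ball_subset_closedBall hz.1.1, fun h => hz.1.2 (ball_subset_closedBall h)⟩

lemma fCoef_eq_circleIntegral_of_annulus {ρ s : ℝ} (hρ : 0 < ρ) (hρ1 : ρ < 1) {f : ℂ → ℂ}
    (hf : AnalyticOnNhd ℂ f (annulus ρ)) (d : ℤ) (hs : ρ < s) (hs' : s < ρ⁻¹) :
    fCoef f d = (2 * π * I)⁻¹ * ∮ z in C(0, s), f z * z ^ (-d - 1) := by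
  have h1 : 1 < ρ⁻¹ := (one_lt_inv₀ hρ).2 hρ1
  rw [fCoef_eq_circleIntegral]
  congr 1
  rcases le_total s 1 with h | h
  · exact circleIntegral_eq_of_annulus hf d (hρ.trans hs) hs h h1
  · exact (circleIntegral_eq_of_annulus hf d one_pos hρ1 h hs').symm

lemma norm_fCoef_le_of_annulus {ρ s M : ℝ} (hρ : 0 < ρ) (hρ1 : ρ < 1) {f : ℂ → ℂ}
    (hf : AnalyticOnNhd ℂ f (annulus ρ)) (hM : ∀ z ∈ annulus ρ, ‖f z‖ ≤ M) (d : ℤ)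
    (hs : ρ < s) (hs' : s < ρ⁻¹) : ‖fCoef f d‖ ≤ M * s ^ (-d) := by
  have hs0 : 0 < s := hρ.trans hs
  have hbound : ∀ z ∈ sphere (0 : ℂ) s, ‖f z * z ^ (-d - 1)‖ ≤ M * s ^ (-d - 1) := fun z hz => by
    rw [mem_sphere_zero_iff_norm] at hz
    rw [norm_mul, norm_zpow, hz]
    exact mul_le_mul_of_nonneg_right (hM z ⟨hz ▸ hs, hz ▸ hs'⟩) (zpow_nonneg hs0.le _)
  have hnorm : ‖(2 * π * I)⁻¹‖ = (2 * π)⁻¹ := by simp [abs_of_pos Real.pi_pos]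
  calc ‖fCoef f d‖ = (2 * π)⁻¹ * ‖∮ z in C(0, s), f z * z ^ (-d - 1)‖ := by
        rw [fCoef_eq_circleIntegral_of_annulus hρ hρ1 hf d hs hs', norm_mul, hnorm]
    _ ≤ (2 * π)⁻¹ * (2 * π * s * (M * s ^ (-d - 1))) := by
        gcongr; exact circleIntegral.norm_integral_le_of_norm_le_const hs0.le hbound
    _ = M * s ^ (-d) := by
        rw [zpow_sub_one₀ hs0.ne']
        field_simp

theorem norm_fCoef_le {ρ r M : ℝ} (hρ : 0 < ρ) (hρr : ρ < r) (hr : r < 1) {f : ℂ → ℂ}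
    (hf : AnalyticOnNhd ℂ f (annulus ρ)) (hM : ∀ z ∈ annulus ρ, ‖f z‖ ≤ M) (d : ℤ) :
    ‖fCoef f d‖ ≤ M * r ^ d.natAbs := by
  have hr0 : 0 < r := hρ.trans hρr
  have hρ1 : ρ < 1 := hρr.trans hr
  rcases le_total 0 d with hd | hd
  · obtain ⟨n, rfl⟩ := Int.eq_ofNat_of_zero_le hd
    have h := norm_fCoef_le_of_annulus hρ hρ1 hf hM n
      (hρ1.trans ((one_lt_inv₀ hr0).2 hr)) ((inv_lt_inv₀ hr0 hρ).2 hρr)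
    rwa [inv_zpow', neg_neg, zpow_natCast] at h
  · obtain ⟨n, rfl⟩ := Int.exists_eq_neg_ofNat hd
    have h := norm_fCoef_le_of_annulus hρ hρ1 hf hM (-n) hρr (hr.trans ((one_lt_inv₀ hρ).2 hρ1))
    rw [neg_neg, zpow_natCast] at h
    simpa using h

end FourierCoefficients

section MatrixBounds

variable {ι κ μ : Type*}

def matVec (A : ι → κ → ℂ) (v : κ →₀ ℂ) (j : ι) : ℂ := ∑ k ∈ v.support, A j k * v k

-- `matOpNorm A` unfolds to `sInf {C | IsMatBound A C}`.
def IsMatBound (A : ι → κ → ℂ) (C : ℝ) : Prop :=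
  0 ≤ C ∧ ∀ v : κ →₀ ℂ, ∑' j, ‖matVec A v j‖ ^ 2 ≤ C ^ 2 * ∑ k ∈ v.support, ‖v k‖ ^ 2

-- Besides being bounded, a Schur-bounded matrix makes the `tsum` in `IsMatBound` converge for
-- every finitely supported vector; a bound alone does not, since a divergent `tsum` is `0`.
def SchurBounded (A : ι → κ → ℂ) : Prop :=
  ∃ K : ℝ, 0 ≤ K ∧ (∀ j, Summable (fun k => ‖A j k‖) ∧ ∑' k, ‖A j k‖ ≤ K) ∧
    ∀ k, Summable (fun j => ‖A j k‖) ∧ ∑' j, ‖A j k‖ ≤ K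

-- `PAP n A`, `PAQ n m A` and `QAP m n A` unfold to instances of `mask`.
def mask (p : ι → Prop) (q : κ → Prop) [DecidablePred p] [DecidablePred q]
    (A : ι → κ → ℂ) : ι → κ → ℂ :=
  fun j k => if p j ∧ q k then A j k else 0

lemma matOpNorm_nonneg (A : ι → κ → ℂ) : 0 ≤ matOpNorm A :=
  Real.sInf_nonneg fun _ hC => hC.1

lemma matOpNorm_le {A : ι → κ → ℂ} {C : ℝ} (h : IsMatBound A C) : matOpNorm A ≤ C :=
  csInf_le ⟨0, fun _ hC => hC.1⟩ h

lemma isClosed_setOf_isMatBound (A : ι → κ → ℂ) : IsClosed {C | IsMatBound A C} := by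
  simp only [IsMatBound, Set.ofPred_and, Set.ofPred_forall]
  exact (isClosed_le continuous_const continuous_id).inter
    (isClosed_iInter fun v => isClosed_le continuous_const (by fun_prop))

lemma isMatBound_matOpNorm {A : ι → κ → ℂ} (h : ∃ C, IsMatBound A C) :
    IsMatBound A (matOpNorm A) :=
  (isClosed_setOf_isMatBound A).csInf_mem h ⟨0, fun _ hC => hC.1⟩

lemma isMatBound_of_forall_sum_le {A : ι → κ → ℂ} {C : ℝ} (hC : 0 ≤ C)
    (h : ∀ (v : κ →₀ ℂ) (J : Finset ι),
      ∑ j ∈ J, ‖matVec A v j‖ ^ 2 ≤ C ^ 2 * ∑ k ∈ v.support, ‖v k‖ ^ 2) :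
    IsMatBound A C :=
  ⟨hC, fun v => tsum_le_of_sum_le' (by positivity) (h v)⟩

lemma IsMatBound.sum_le {A : ι → κ → ℂ} {C : ℝ} (hA : IsMatBound A C) {v : κ →₀ ℂ}
    (hv : Summable fun j => ‖matVec A v j‖ ^ 2) (J : Finset ι) :
    ∑ j ∈ J, ‖matVec A v j‖ ^ 2 ≤ C ^ 2 * ∑ k ∈ v.support, ‖v k‖ ^ 2 :=
  (hv.sum_le_tsum J fun _ _ => by positivity).trans (hA.2 v)

lemma matVec_eq_sum_of_support_subset (A : ι → κ → ℂ) {v : κ →₀ ℂ} {s : Finset κ}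
    (hs : v.support ⊆ s) (j : ι) : matVec A v j = ∑ k ∈ s, A j k * v k :=
  Finset.sum_subset hs fun k _ hk => by rw [Finsupp.notMem_support_iff.1 hk, mul_zero]

lemma norm_matVec_le (A : ι → κ → ℂ) (v : κ →₀ ℂ) (j : ι) :
    ‖matVec A v j‖ ≤ ∑ k ∈ v.support, ‖A j k‖ * ‖v k‖ :=
  (norm_sum_le _ _).trans_eq (by simp only [norm_mul])

lemma sq_norm_matVec_le {A : ι → κ → ℂ} {K : ℝ}
    (hrow : ∀ j, Summable (fun k => ‖A j k‖) ∧ ∑' k, ‖A j k‖ ≤ K) (v : κ →₀ ℂ) (j : ι) :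
    ‖matVec A v j‖ ^ 2 ≤ K * ∑ k ∈ v.support, ‖A j k‖ * ‖v k‖ ^ 2 := by
  have hrowK : ∑ k ∈ v.support, ‖A j k‖ ≤ K :=
    ((hrow j).1.sum_le_tsum _ fun _ _ => norm_nonneg _).trans (hrow j).2
  calc ‖matVec A v j‖ ^ 2 ≤ (∑ k ∈ v.support, ‖A j k‖ * ‖v k‖) ^ 2 := by
        gcongr; exact norm_matVec_le A v j
    _ ≤ (∑ k ∈ v.support, ‖A j k‖) * ∑ k ∈ v.support, ‖A j k‖ * ‖v k‖ ^ 2 :=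
        Finset.sum_sq_le_sum_mul_sum_of_sq_le_mul _ (fun _ _ => norm_nonneg _)
          (fun _ _ => by positivity) fun _ _ => le_of_eq (by ring)
    _ ≤ K * ∑ k ∈ v.support, ‖A j k‖ * ‖v k‖ ^ 2 := by gcongr

namespace SchurBounded

variable {A : ι → κ → ℂ}

lemma summable_sq_norm_matVec (hA : SchurBounded A) (v : κ →₀ ℂ) :
    Summable fun j => ‖matVec A v j‖ ^ 2 := by
  obtain ⟨K, -, hrow, hcol⟩ := hA
  exact .of_nonneg_of_le (fun _ => by positivity) (sq_norm_matVec_le hrow v)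
    ((summable_sum fun k _ => ((hcol k).1.mul_right _)).mul_left K)

lemma exists_isMatBound (hA : SchurBounded A) : ∃ C, IsMatBound A C := by
  have hsum := hA.summable_sq_norm_matVec
  obtain ⟨K, hK, hrow, hcol⟩ := hA
  refine ⟨K, hK, fun v => ?_⟩
  have hcolsum : ∀ k, Summable fun j => ‖A j k‖ * ‖v k‖ ^ 2 := fun k => (hcol k).1.mul_right _
  calc ∑' j, ‖matVec A v j‖ ^ 2 ≤ ∑' j, K * ∑ k ∈ v.support, ‖A j k‖ * ‖v k‖ ^ 2 :=
        Summable.tsum_le_tsum (sq_norm_matVec_le hrow v) (hsum v)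
          ((summable_sum fun k _ => hcolsum k).mul_left K)
    _ = K * ∑ k ∈ v.support, (∑' j, ‖A j k‖) * ‖v k‖ ^ 2 := by
        rw [tsum_mul_left, Summable.tsum_finsetSum fun k _ => hcolsum k]
        simp only [tsum_mul_right]
    _ ≤ K * ∑ k ∈ v.support, K * ‖v k‖ ^ 2 := by
        gcongr with k; exact (hcol k).2
    _ = K ^ 2 * ∑ k ∈ v.support, ‖v k‖ ^ 2 := by rw [← Finset.mul_sum]; ring

lemma isMatBound_matOpNorm (hA : SchurBounded A) : IsMatBound A (matOpNorm A) :=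
  _root_.isMatBound_matOpNorm hA.exists_isMatBound

lemma exists_norm_matVec_le (hA : SchurBounded A) (v : κ →₀ ℂ) :
    ∃ c, ∀ j, ‖matVec A v j‖ ≤ c := by
  obtain ⟨K, -, hrow, -⟩ := hA
  exact ⟨∑ k ∈ v.support, K * ‖v k‖, fun j => (norm_matVec_le A v j).trans
    (Finset.sum_le_sum fun k _ => by
      gcongr; exact ((hrow j).1.le_tsum k fun _ _ => norm_nonneg _).trans (hrow j).2)⟩

lemma summable_mul_of_bounded (hA : SchurBounded A) {u : κ → ℂ} {c : ℝ} (hu : ∀ k, ‖u k‖ ≤ c)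
    (j : ι) : Summable fun k => A j k * u k := by
  obtain ⟨K, -, hrow, -⟩ := hA
  refine .of_norm (.of_nonneg_of_le (fun _ => norm_nonneg _) (fun k => ?_) ((hrow j).1.mul_right c))
  rw [norm_mul]; gcongr; exact hu k

lemma mask (hA : SchurBounded A) (p : ι → Prop) (q : κ → Prop) [DecidablePred p]
    [DecidablePred q] : SchurBounded (mask p q A) := by
  obtain ⟨K, hK, hrow, hcol⟩ := hA
  have hle : ∀ j k, ‖_root_.mask p q A j k‖ ≤ ‖A j k‖ := fun j k => by
    unfold _root_.mask; split_ifs <;> simp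
  refine ⟨K, hK, fun j => ?_, fun k => ?_⟩
  · have hs := (hrow j).1.of_nonneg_of_le (fun _ => norm_nonneg _) (hle j)
    exact ⟨hs, (hs.tsum_le_tsum (hle j) (hrow j).1).trans (hrow j).2⟩
  · have hs := (hcol k).1.of_nonneg_of_le (fun _ => norm_nonneg _) (hle · k)
    exact ⟨hs, (hs.tsum_le_tsum (hle · k) (hcol k).1).trans (hcol k).2⟩

end SchurBounded

lemma matVec_mask (p : ι → Prop) (q : κ → Prop) [DecidablePred p] [DecidablePred q]
    (A : ι → κ → ℂ) (v : κ →₀ ℂ) (j : ι) :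
    matVec (mask p q A) v j = if p j then matVec A (v.filter q) j else 0 := by
  unfold matVec mask
  split_ifs with hj
  · rw [Finsupp.support_filter, Finset.sum_filter]
    refine Finset.sum_congr rfl fun k _ => ?_
    by_cases hk : q k <;> simp [hj, hk]
  · simp [hj]

lemma sum_sq_norm_filter_le (v : κ →₀ ℂ) (q : κ → Prop) [DecidablePred q] :
    ∑ k ∈ (v.filter q).support, ‖v.filter q k‖ ^ 2 ≤ ∑ k ∈ v.support, ‖v k‖ ^ 2 := by
  rw [Finsupp.support_filter]
  refine (Finset.sum_le_sum fun k hk => ?_).trans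
    (Finset.sum_le_sum_of_subset_of_nonneg (Finset.filter_subset q _) fun _ _ _ => by positivity)
  rw [Finsupp.filter_apply_pos _ _ (Finset.mem_filter.1 hk).2]

lemma matOpNorm_mask_le {A : ι → κ → ℂ} (hA : SchurBounded A) (p : ι → Prop) (q : κ → Prop)
    [DecidablePred p] [DecidablePred q] : matOpNorm (mask p q A) ≤ matOpNorm A := by
  refine matOpNorm_le (isMatBound_of_forall_sum_le (matOpNorm_nonneg A) fun v J => ?_)
  calc ∑ j ∈ J, ‖matVec (mask p q A) v j‖ ^ 2 ≤ ∑ j ∈ J, ‖matVec A (v.filter q) j‖ ^ 2 :=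
        Finset.sum_le_sum fun j _ => by rw [matVec_mask]; split_ifs <;> simp
    _ ≤ matOpNorm A ^ 2 * ∑ k ∈ (v.filter q).support, ‖v.filter q k‖ ^ 2 :=
        hA.isMatBound_matOpNorm.sum_le (hA.summable_sq_norm_matVec _) J
    _ ≤ matOpNorm A ^ 2 * ∑ k ∈ v.support, ‖v k‖ ^ 2 := by gcongr; exact sum_sq_norm_filter_le v q

lemma sum_sq_norm_add_le (J : Finset ι) (f g : ι → ℂ) {a b : ℝ} (ha : 0 ≤ a) (hb : 0 ≤ b)
    (hf : ∑ j ∈ J, ‖f j‖ ^ 2 ≤ a ^ 2) (hg : ∑ j ∈ J, ‖g j‖ ^ 2 ≤ b ^ 2) :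
    ∑ j ∈ J, ‖f j + g j‖ ^ 2 ≤ (a + b) ^ 2 := by
  let toE : (ι → ℂ) → EuclideanSpace ℂ J := fun h => WithLp.toLp 2 fun j => h j
  have hsq : ∀ h, ‖toE h‖ ^ 2 = ∑ j ∈ J, ‖h j‖ ^ 2 := fun h => by
    rw [EuclideanSpace.norm_sq_eq, ← Finset.sum_coe_sort J]
  have hle : ∀ h c, 0 ≤ c → ∑ j ∈ J, ‖h j‖ ^ 2 ≤ c ^ 2 → ‖toE h‖ ≤ c := fun h c hc hh =>
    (pow_le_pow_iff_left₀ (norm_nonneg _) hc two_ne_zero).1 ((hsq h).trans_le hh)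
  change ∑ j ∈ J, ‖(f + g) j‖ ^ 2 ≤ _
  rw [← hsq (f + g), show toE (f + g) = toE f + toE g from rfl]
  gcongr
  exact (norm_add_le _ _).trans (add_le_add (hle f a ha hf) (hle g b hb hg))

lemma matVec_add (X Y : ι → κ → ℂ) (v : κ →₀ ℂ) (j : ι) :
    matVec (X + Y) v j = matVec X v j + matVec Y v j := by
  simp only [matVec, Pi.add_apply, add_mul, Finset.sum_add_distrib]

lemma matOpNorm_add_le {X Y : ι → κ → ℂ} (hX : SchurBounded X) (hY : SchurBounded Y) :
    matOpNorm (X + Y) ≤ matOpNorm X + matOpNorm Y := by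
  refine matOpNorm_le (isMatBound_of_forall_sum_le
    (add_nonneg (matOpNorm_nonneg X) (matOpNorm_nonneg Y)) fun v J => ?_)
  set S := ∑ k ∈ v.support, ‖v k‖ ^ 2
  have hS : 0 ≤ S := by positivity
  have hbound : ∀ {Z : ι → κ → ℂ}, SchurBounded Z →
      ∑ j ∈ J, ‖matVec Z v j‖ ^ 2 ≤ (matOpNorm Z * √S) ^ 2 := fun hZ => by
    rw [mul_pow, Real.sq_sqrt hS]
    exact hZ.isMatBound_matOpNorm.sum_le (hZ.summable_sq_norm_matVec v) J
  calc ∑ j ∈ J, ‖matVec (X + Y) v j‖ ^ 2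
      = ∑ j ∈ J, ‖matVec X v j + matVec Y v j‖ ^ 2 := by simp only [matVec_add]
    _ ≤ (matOpNorm X * √S + matOpNorm Y * √S) ^ 2 :=
        sum_sq_norm_add_le J _ _ (by positivity [matOpNorm_nonneg X])
          (by positivity [matOpNorm_nonneg Y]) (hbound hX) (hbound hY)
    _ = (matOpNorm X + matOpNorm Y) ^ 2 * S := by rw [← add_mul, mul_pow, Real.sq_sqrt hS]

lemma matVec_eq_tsum_mul {X : ι → μ → ℂ} {U : μ → κ → ℂ} {C : ι → κ → ℂ}
    (hC : ∀ j k, HasSum (fun l => X j l * U l k) (C j k)) (v : κ →₀ ℂ) (j : ι) :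
    matVec C v j = ∑' l, X j l * matVec U v l := by
  simp only [matVec, Finset.mul_sum, ← mul_assoc]
  rw [Summable.tsum_finsetSum fun k _ => (hC j k).summable.mul_right (v k)]
  exact Finset.sum_congr rfl fun k _ => ((hC j k).mul_right (v k)).tsum_eq.symm

lemma IsMatBound.sum_sq_norm_tsum_le {X : ι → μ → ℂ} {c : ℝ} (hX : IsMatBound X c)
    (hXs : ∀ w, Summable fun j => ‖matVec X w j‖ ^ 2) {u : μ → ℂ}
    (hu : Summable fun l => ‖u l‖ ^ 2) (hXu : ∀ j, Summable fun l => X j l * u l)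
    (J : Finset ι) : ∑ j ∈ J, ‖∑' l, X j l * u l‖ ^ 2 ≤ c ^ 2 * ∑' l, ‖u l‖ ^ 2 := by
  classical
  have htrunc : ∀ L : Finset μ, ∑ j ∈ J, ‖∑ l ∈ L, X j l * u l‖ ^ 2 ≤ c ^ 2 * ∑' l, ‖u l‖ ^ 2 := by
    intro L
    let w : μ →₀ ℂ := Finsupp.indicator L fun l _ => u l
    have hwL : w.support ⊆ L := Finsupp.support_indicator_subset L _
    have hw : ∀ l ∈ L, w l = u l := fun l hl => by simp [w, Finsupp.indicator_apply, hl]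
    have hXw : ∀ j, matVec X w j = ∑ l ∈ L, X j l * u l := fun j => by
      rw [matVec_eq_sum_of_support_subset X hwL]
      exact Finset.sum_congr rfl fun l hl => by rw [hw l hl]
    calc ∑ j ∈ J, ‖∑ l ∈ L, X j l * u l‖ ^ 2 = ∑ j ∈ J, ‖matVec X w j‖ ^ 2 := by simp only [hXw]
      _ ≤ c ^ 2 * ∑ l ∈ w.support, ‖w l‖ ^ 2 := hX.sum_le (hXs w) J
      _ ≤ c ^ 2 * ∑' l, ‖u l‖ ^ 2 := by
          gcongr
          rw [Finset.sum_congr rfl fun l hl => by rw [hw l (hwL hl)]]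
          exact hu.sum_le_tsum _ fun _ _ => by positivity
  have hlim : Filter.Tendsto (fun L : Finset μ => ∑ j ∈ J, ‖∑ l ∈ L, X j l * u l‖ ^ 2)
      Filter.atTop (nhds (∑ j ∈ J, ‖∑' l, X j l * u l‖ ^ 2)) :=
    tendsto_finsetSum J fun j _ => ((continuous_norm.pow 2).tendsto _).comp (hXu j).hasSum
  exact le_of_tendsto hlim (Filter.Eventually.of_forall htrunc)

lemma matOpNorm_le_mul {X : ι → μ → ℂ} {U : μ → κ → ℂ} {C : ι → κ → ℂ} (hX : SchurBounded X)
    (hU : SchurBounded U) (hC : ∀ j k, HasSum (fun l => X j l * U l k) (C j k)) :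
    matOpNorm C ≤ matOpNorm X * matOpNorm U := by
  refine matOpNorm_le (isMatBound_of_forall_sum_le
    (mul_nonneg (matOpNorm_nonneg X) (matOpNorm_nonneg U)) fun v J => ?_)
  obtain ⟨c, hc⟩ := hU.exists_norm_matVec_le v
  calc ∑ j ∈ J, ‖matVec C v j‖ ^ 2 = ∑ j ∈ J, ‖∑' l, X j l * matVec U v l‖ ^ 2 := by
        simp only [matVec_eq_tsum_mul hC]
    _ ≤ matOpNorm X ^ 2 * ∑' l, ‖matVec U v l‖ ^ 2 :=
        hX.isMatBound_matOpNorm.sum_sq_norm_tsum_le hX.summable_sq_norm_matVec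
          (hU.summable_sq_norm_matVec v) (hX.summable_mul_of_bounded hc) J
    _ ≤ matOpNorm X ^ 2 * (matOpNorm U ^ 2 * ∑ k ∈ v.support, ‖v k‖ ^ 2) := by
        gcongr; exact hU.isMatBound_matOpNorm.2 v
    _ = (matOpNorm X * matOpNorm U) ^ 2 * ∑ k ∈ v.support, ‖v k‖ ^ 2 := by ring

lemma hasSum_mask_mul {X : ι → μ → ℂ} {U : μ → κ → ℂ} {C : ι → κ → ℂ}
    (hC : ∀ j k, HasSum (fun l => X j l * U l k) (C j k)) (p : ι → Prop) (q : κ → Prop)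
    [DecidablePred p] [DecidablePred q] (j : ι) (k : κ) :
    HasSum (fun l => mask p (fun _ => True) X j l * mask (fun _ => True) q U l k)
      (mask p q C j k) := by
  by_cases hp : p j <;> by_cases hq : q k <;> simp [mask, hp, hq, hC j k, hasSum_zero]

end MatrixBounds

lemma summable_pow_natAbs {r : ℝ} (hr0 : 0 ≤ r) (hr1 : r < 1) :
    Summable fun d : ℤ => r ^ d.natAbs := by
  rw [summable_int_iff_summable_nat_and_neg]
  constructor <;> simpa using summable_geometric_of_lt_one hr0 hr1

lemma schurBounded_of_norm_le {A : ℤ → ℤ → ℂ} {M r : ℝ} (hr0 : 0 ≤ r) (hr1 : r < 1)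
    (hA : ∀ j k, ‖A j k‖ ≤ M * r ^ (j - k).natAbs) : SchurBounded A := by
  have hM : 0 ≤ M := by simpa using (norm_nonneg _).trans (hA 0 0)
  have hT := summable_pow_natAbs hr0 hr1
  have hline : ∀ (e : ℤ ≃ ℤ) (g : ℤ → ℂ), (∀ i, ‖g i‖ ≤ M * r ^ (e i).natAbs) →
      Summable (fun i => ‖g i‖) ∧ ∑' i, ‖g i‖ ≤ M * ∑' d : ℤ, r ^ d.natAbs := by
    intro e g hg
    have hs : Summable fun i => M * r ^ (e i).natAbs :=
      ((e.summable_iff (f := fun d : ℤ => r ^ d.natAbs)).2 hT).mul_left M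
    have hsg := hs.of_nonneg_of_le (fun _ => norm_nonneg _) hg
    refine ⟨hsg, (hsg.tsum_le_tsum hg hs).trans_eq ?_⟩
    rw [tsum_mul_left, e.tsum_eq (fun d : ℤ => r ^ d.natAbs)]
  exact ⟨_, mul_nonneg hM (tsum_nonneg fun _ => by positivity),
    fun j => hline (Equiv.subLeft j) _ (hA j), fun k => hline (Equiv.subRight k) _ (hA · k)⟩

section StarProduct

open Complex
open scoped Real

lemma memV.exists_norm_fCoef_le {a : Symb} (ha : memV a) :
    ∃ M r : ℝ, 0 ≤ M ∧ 0 ≤ r ∧ r < 1 ∧ ∀ x n, ‖fCoef (a x) n‖ ≤ M * r ^ n.natAbs := by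
  obtain ⟨ρ, ⟨hρ0, hρ1⟩, han, M, hM⟩ := ha
  have h1 : (1 : ℂ) ∈ annulus ρ := ⟨by simpa using hρ1, by simpa using (one_lt_inv₀ hρ0).2 hρ1⟩
  exact ⟨M, (ρ + 1) / 2, (norm_nonneg _).trans (hM 0 1 h1), by linarith, by linarith,
    fun x n => norm_fCoef_le hρ0 (by linarith) (by linarith) (han x) (hM x) n⟩

lemma memV.schurBounded_Lmat {a : Symb} (ha : memV a) : SchurBounded (Lmat a) :=
  let ⟨_, _, _, hr0, hr1, h⟩ := ha.exists_norm_fCoef_le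
  schurBounded_of_norm_le hr0 hr1 fun j k => h (j + k) (j - k)

lemma integral_exp_I_mul_int (c : ℤ) :
    ∫ p in (-π)..π, exp (I * c * p) = if c = 0 then 2 * (π : ℂ) else 0 := by
  split_ifs with h
  · simp only [h, Int.cast_zero, mul_zero, zero_mul, exp_zero, intervalIntegral.integral_const,
      real_smul, mul_one]
    push_cast; ring
  · have hc : I * c ≠ 0 := mul_ne_zero I_ne_zero (Int.cast_ne_zero.2 h)
    rw [integral_exp_mul_complex hc,
      show I * c * (π : ℂ) = I * c * ((-π : ℝ) : ℂ) + c * (2 * π * I) by push_cast; ring,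
      exp_add, exp_int_mul_two_pi_mul_I, mul_one, sub_self, zero_div]

lemma hasSum_fCoef_tsum_zpow_mul {ι : Type*} [Countable ι] {e : ι → ℤ} {c : ι → ℂ}
    (hc : Summable fun i => ‖c i‖) (d : ℤ) :
    HasSum (fun i => if e i = d then c i else 0) (fCoef (fun z => ∑' i, z ^ e i * c i) d) := by
  set F : ι → ℝ → ℂ := fun i p => c i * exp (I * (e i - d : ℤ) * p)
  have hterm : ∀ i (p : ℝ), exp (I * p) ^ e i * c i * exp (-(I * d * p)) = F i p := fun i p => by
    rw [← exp_int_mul, mul_comm _ (c i), mul_assoc, ← exp_add]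
    simp only [F]
    congr 2
    push_cast; ring
  have hnorm : ∀ i p, ‖F i p‖ = ‖c i‖ := fun i p => by simp [F, norm_exp]
  have hint : ∀ i, (2 * (π : ℂ))⁻¹ * ∫ p in (-π)..π, F i p = if e i = d then c i else 0 :=
    fun i => by
      have hπ : (π : ℂ) ≠ 0 := ofReal_ne_zero.2 Real.pi_ne_zero
      simp only [F, intervalIntegral.integral_const_mul, integral_exp_I_mul_int, sub_eq_zero]
      split_ifs
      · field_simp
      · simp
  have hF : HasSum (fun i => ∫ p in (-π)..π, F i p)
      (∫ p in (-π)..π, (∑' i, exp (I * p) ^ e i * c i) * exp (-(I * d * p))) := by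
    refine intervalIntegral.hasSum_integral_of_dominated_convergence (fun i _ => ‖c i‖)
      (fun i => by fun_prop) (fun i => .of_forall fun p _ => (hnorm i p).le)
      (.of_forall fun _ _ => hc) intervalIntegrable_const (.of_forall fun p _ => ?_)
    have hs : Summable fun i => exp (I * p) ^ e i * c i :=
      .of_norm (hc.congr fun i => by simp [norm_exp])
    simpa only [hterm] using hs.hasSum.mul_right (exp (-(I * d * p)))
  have h := hF.mul_left (2 * (π : ℂ))⁻¹
  simp only [hint] at h
  exact h

theorem hasSum_Lmat_starProd {a b : Symb} (ha : memV a) (hb : memV b) (j k : ℤ) :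
    HasSum (fun l => Lmat a j l * Lmat b l k) (Lmat (starProd a b) j k) := by
  obtain ⟨Ma, ra, hMa, hra0, hra1, hda⟩ := ha.exists_norm_fCoef_le
  obtain ⟨Mb, rb, hMb, hrb0, hrb1, hdb⟩ := hb.exists_norm_fCoef_le
  set c : ℤ × ℤ → ℂ := fun mn => fCoef (a (j + k + mn.1)) mn.2 * fCoef (b (j + k - mn.2)) mn.1
  have hc : Summable fun mn => ‖c mn‖ := by
    refine .of_nonneg_of_le (fun _ => norm_nonneg _) (fun mn => ?_)
      (((summable_pow_natAbs hrb0 hrb1).mul_left Mb).mul_of_nonneg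
        ((summable_pow_natAbs hra0 hra1).mul_left Ma) (fun _ => by positivity)
        (fun _ => by positivity))
    rw [norm_mul, mul_comm]
    exact mul_le_mul (hdb _ _) (hda _ _) (norm_nonneg _) (by positivity)
  have hstar : starProd a b (j + k) = fun z => ∑' mn : ℤ × ℤ, z ^ (mn.1 + mn.2) * c mn := by
    funext z; simp only [starProd, c, mul_assoc]
  have h := hasSum_fCoef_tsum_zpow_mul (e := fun mn : ℤ × ℤ => mn.1 + mn.2) hc (j - k)
  rw [← hstar] at h
  -- the terms with `m + n = j - k` are indexed by `l ↦ (l - k, j - l)`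
  have hinj : Function.Injective fun l : ℤ => (l - k, j - l) := fun l l' h => by
    simpa using congrArg Prod.fst h
  have hsupp : ∀ mn ∉ Set.range fun l : ℤ => (l - k, j - l),
      (if mn.1 + mn.2 = j - k then c mn else 0) = 0 := fun mn hmn => if_neg fun h =>
    hmn ⟨mn.1 + k, Prod.ext (by simp) (by simp; omega)⟩
  convert (hinj.hasSum_iff hsupp).2 h using 1
  · funext l
    simp only [Function.comp, c, Lmat, sub_add_sub_cancel', if_true,
      show j + k + (l - k) = j + l by ring, show j + k - (j - l) = l + k by ring]
  · rfl

end StarProduct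

section Windows

variable {X U C : ℤ → ℤ → ℂ}

lemma matOpNorm_PAP_le_mul (hX : SchurBounded X) (hU : SchurBounded U)
    (hC : ∀ j k, HasSum (fun l => X j l * U l k) (C j k)) (n : ℕ) :
    matOpNorm (PAP n C) ≤ matOpNorm (mask (fun j => |j| ≤ (n : ℤ)) (fun _ => True) X) *
      matOpNorm (mask (fun _ => True) (fun k => |k| ≤ (n : ℤ)) U) :=
  matOpNorm_le_mul (hX.mask _ _) (hU.mask _ _) (hasSum_mask_mul hC _ _)

lemma mask_rows_eq_add (n m : ℕ) (A : ℤ → ℤ → ℂ) :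
    mask (fun j => |j| ≤ (n : ℤ)) (fun _ => True) A =
      mask (fun j => |j| ≤ (n : ℤ)) (fun _ => True) (PAP (n + m) A) + PAQ n (n + m) A := by
  funext j k
  simp only [mask, PAP, PAQ, Pi.add_apply, and_true, abs_le, Nat.cast_add]
  split_ifs <;> first | omega | simp

lemma mask_cols_eq_add (n m : ℕ) (A : ℤ → ℤ → ℂ) :
    mask (fun _ => True) (fun k => |k| ≤ (n : ℤ)) A =
      mask (fun _ => True) (fun k => |k| ≤ (n : ℤ)) (PAP (n + m) A) + QAP (n + m) n A := by
  funext j k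
  simp only [mask, PAP, QAP, Pi.add_apply, true_and, abs_le, Nat.cast_add]
  split_ifs <;> first | omega | simp

theorem matOpNorm_PAP_le_mul_PAP_add_PAQ (hX : SchurBounded X) (hU : SchurBounded U)
    (hC : ∀ j k, HasSum (fun l => X j l * U l k) (C j k)) (n m : ℕ) :
    matOpNorm (PAP n C) ≤
      matOpNorm U * (matOpNorm (PAP (n + m) X) + matOpNorm (PAQ n (n + m) X)) := by
  have hrows : matOpNorm (mask (fun j => |j| ≤ (n : ℤ)) (fun _ => True) X) ≤
      matOpNorm (PAP (n + m) X) + matOpNorm (PAQ n (n + m) X) := by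
    rw [mask_rows_eq_add n m]
    exact (matOpNorm_add_le ((hX.mask _ _).mask _ _) (hX.mask _ _)).trans
      (add_le_add_left (matOpNorm_mask_le (hX.mask _ _) _ _) _)
  rw [mul_comm]
  exact (matOpNorm_PAP_le_mul hX hU hC n).trans
    (mul_le_mul hrows (matOpNorm_mask_le hU _ _) (matOpNorm_nonneg _)
      (add_nonneg (matOpNorm_nonneg _) (matOpNorm_nonneg _)))

theorem matOpNorm_PAP_le_mul_PAP_add_QAP (hX : SchurBounded X) (hU : SchurBounded U)
    (hC : ∀ j k, HasSum (fun l => X j l * U l k) (C j k)) (n m : ℕ) :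
    matOpNorm (PAP n C) ≤
      matOpNorm X * (matOpNorm (PAP (n + m) U) + matOpNorm (QAP (n + m) n U)) := by
  have hcols : matOpNorm (mask (fun _ => True) (fun k => |k| ≤ (n : ℤ)) U) ≤
      matOpNorm (PAP (n + m) U) + matOpNorm (QAP (n + m) n U) := by
    rw [mask_cols_eq_add n m]
    exact (matOpNorm_add_le ((hU.mask _ _).mask _ _) (hU.mask _ _)).trans
      (add_le_add_left (matOpNorm_mask_le (hU.mask _ _) _ _) _)
  exact (matOpNorm_PAP_le_mul hX hU hC n).trans
    (mul_le_mul (matOpNorm_mask_le hX _ _) hcols (matOpNorm_nonneg _) (matOpNorm_nonneg _))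

end Windows

section LocalizationNorm

lemma summable_half_pow_mul {c : ℕ → ℝ} {K : ℝ} (h0 : ∀ n, 0 ≤ c n) (hK : ∀ n, c n ≤ K) :
    Summable fun n => (2 : ℝ)⁻¹ ^ (n + 1) * c n :=
  .of_nonneg_of_le (fun n => mul_nonneg (by positivity) (h0 n))
    (fun n => mul_le_mul_of_nonneg_left (hK n) (by positivity))
    (((summable_nat_add_iff 1).2
      (summable_geometric_of_lt_one (by norm_num) (by norm_num : (2 : ℝ)⁻¹ < 1))).mul_right K)

lemma tsum_half_pow_mul_shift_le {c : ℕ → ℝ} {K : ℝ} (h0 : ∀ n, 0 ≤ c n) (hK : ∀ n, c n ≤ K)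
    (m : ℕ) :
    ∑' n, (2 : ℝ)⁻¹ ^ (n + 1) * c (n + m) ≤ 2 ^ (m + 1) * ∑' n, (2 : ℝ)⁻¹ ^ (n + 1) * c n := by
  set f : ℕ → ℝ := fun n => (2 : ℝ)⁻¹ ^ (n + 1) * c n
  have hf0 : ∀ n, 0 ≤ f n := fun n => mul_nonneg (by positivity) (h0 n)
  have hshift : ∀ n, (2 : ℝ)⁻¹ ^ (n + 1) * c (n + m) = 2 ^ m * f (n + m) := fun n => by
    simp only [f, ← mul_assoc, pow_add, inv_pow]
    field_simp
  calc ∑' n, (2 : ℝ)⁻¹ ^ (n + 1) * c (n + m) = 2 ^ m * ∑' n, f (n + m) := by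
        simp only [hshift, tsum_mul_left]
    _ ≤ 2 ^ m * ∑' n, f n := mul_le_mul_of_nonneg_left
        (tsum_comp_le_tsum_of_inj (summable_half_pow_mul h0 hK) hf0 (add_left_injective m))
        (by positivity)
    _ ≤ 2 ^ (m + 1) * ∑' n, f n := by
        gcongr
        · exact tsum_nonneg hf0
        · norm_num
        · omega

theorem locNorm_le_of_forall_PAP_le {c d : Symb} {γ : ℝ} {β : ℕ → ℝ} (m : ℕ)
    (hd : SchurBounded (Lmat d)) (hγ : 0 ≤ γ) (hβ0 : ∀ n, 0 ≤ β n)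
    (hβ : ∀ n, β n ≤ matOpNorm (Lmat d))
    (h : ∀ n, matOpNorm (PAP n (Lmat c)) ≤ γ * (matOpNorm (PAP (n + m) (Lmat d)) + β n)) :
    locNorm c ≤ γ * (2 ^ (m + 1) * locNorm d + ∑' n, (2 : ℝ)⁻¹ ^ (n + 1) * β n) := by
  set α : ℕ → ℝ := fun n => matOpNorm (PAP n (Lmat d))
  have hα0 : ∀ n, 0 ≤ α n := fun n => matOpNorm_nonneg _
  have hα : ∀ n, α n ≤ matOpNorm (Lmat d) := fun n => matOpNorm_mask_le hd _ _
  have hsα := summable_half_pow_mul (fun n => hα0 (n + m)) (fun n => hα (n + m))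
  have hsβ := summable_half_pow_mul hβ0 hβ
  have hsum : Summable fun n => (2 : ℝ)⁻¹ ^ (n + 1) * (γ * (α (n + m) + β n)) :=
    ((hsα.add hsβ).mul_left γ).congr fun n => by ring
  calc locNorm c ≤ ∑' n, (2 : ℝ)⁻¹ ^ (n + 1) * (γ * (α (n + m) + β n)) :=
        Summable.tsum_le_tsum (fun n => mul_le_mul_of_nonneg_left (h n) (by positivity))
          (.of_nonneg_of_le (fun n => mul_nonneg (by positivity) (matOpNorm_nonneg _))
            (fun n => mul_le_mul_of_nonneg_left (h n) (by positivity)) hsum) hsum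
    _ = γ * (∑' n, (2 : ℝ)⁻¹ ^ (n + 1) * α (n + m) + ∑' n, (2 : ℝ)⁻¹ ^ (n + 1) * β n) := by
        rw [← hsα.tsum_add hsβ, ← tsum_mul_left]
        exact tsum_congr fun n => by ring
    _ ≤ γ * (2 ^ (m + 1) * locNorm d + ∑' n, (2 : ℝ)⁻¹ ^ (n + 1) * β n) := by
        gcongr
        exact tsum_half_pow_mul_shift_le hα0 hα m

end LocalizationNorm

/-- **Bounds for the localization norm of a star product** (Lemma 3.9 of the paper).
For `a, b ∈ V` and `m ∈ ℕ₀`,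
`‖a⋆b‖_loc ≤ ‖L(b)‖ (2^{m+1} ‖a‖_loc + ∑_n 2^{-(n+1)} ‖P̃_n L(a) Q̃_{n+m}‖)` and
`‖a⋆b‖_loc ≤ ‖L(a)‖ (2^{m+1} ‖b‖_loc + ∑_n 2^{-(n+1)} ‖Q̃_{n+m} L(b) P̃_n‖)`. -/
theorem loc_norm_star_product_bound (a b : Symb) (ha : memV a) (hb : memV b) (m : ℕ) :
    locNorm (starProd a b) ≤
      matOpNorm (Lmat b) *
        ((2 : ℝ) ^ (m + 1) * locNorm a +
          ∑' n : ℕ, ((2 : ℝ))⁻¹ ^ (n + 1) * matOpNorm (PAQ n (n + m) (Lmat a))) ∧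
    locNorm (starProd a b) ≤
      matOpNorm (Lmat a) *
        ((2 : ℝ) ^ (m + 1) * locNorm b +
          ∑' n : ℕ, ((2 : ℝ))⁻¹ ^ (n + 1) * matOpNorm (QAP (n + m) n (Lmat b))) := by
  have hA := ha.schurBounded_Lmat
  have hB := hb.schurBounded_Lmat
  have hAB := hasSum_Lmat_starProd ha hb
  exact ⟨locNorm_le_of_forall_PAP_le m hA (matOpNorm_nonneg _) (fun _ => matOpNorm_nonneg _)
      (fun _ => matOpNorm_mask_le hA _ _) fun n => matOpNorm_PAP_le_mul_PAP_add_PAQ hA hB hAB n m,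
    locNorm_le_of_forall_PAP_le m hB (matOpNorm_nonneg _) (fun _ => matOpNorm_nonneg _)
      (fun _ => matOpNorm_mask_le hB _ _) fun n => matOpNorm_PAP_le_mul_PAP_add_QAP hA hB hAB n m⟩

end
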